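/- Let F ⊂ ∂Ω ∩ C_R(0,0) be a set of boundary points of a vanishing-Reifenberg-flat parabolic domain such that for every (Y,s) ∈ F and every ρ ≤ 2R, the orthogonal projection p onto the plane {x_n = 0} satisfies H^n(p(C_ρ(Y,s) ∩ ∂Ω)) > θ ρ^{n+1} with θ = c(n)ε, and the boundary is ε²-flat at all scales ≤ R. Then F is a Lip(1,1/2) graph over {x_n = 0}: for all (Y,s),(Z,t) ∈ F, ‖(Y,s)−(Z,t)‖ ≤ C(n,ε)(|y−z| + |s−t|^{1/2}), where y,z are the projections of Y,Z onto {x_n=0}. -/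

import Mathlib

open MeasureTheory Real Set Filter Topology
open scoped ENNReal NNReal BigOperators

noncomputable section

abbrev Pt (n : ℕ) := EuclideanSpace ℝ (Fin n) × ℝ

/-- Real inner product on `ℝ^n`. -/
def ip {n : ℕ} (x y : EuclideanSpace ℝ (Fin n)) : ℝ := inner ℝ x y

/-- Parabolic distance between points of `ℝ^n × ℝ`. -/
def pdist {n : ℕ} (p q : Pt n) : ℝ := dist p.1 q.1 + Real.sqrt |p.2 - q.2|

/-- The parabolic cylinder of radius `R` centered at `c`. -/
def pcyl {n : ℕ} (c : Pt n) (R : ℝ) : Set (Pt n) :=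
  {p | dist p.1 c.1 < R ∧ |p.2 - c.2| < R ^ 2}

/-- The (unnormalized) parabolic surface measure: integrate the `(n-1)`-dimensional
Hausdorff measure of the time slices. -/
def sliceMeasure (n : ℕ) (F : Set (Pt n)) : ℝ≥0∞ :=
  ∫⁻ t : ℝ, μH[(n : ℝ) - 1] {X : EuclideanSpace ℝ (Fin n) | (X, t) ∈ F}

/-- Orthogonal projection onto the `n`-plane through the origin with spatial unit normal
`e` (containing the time direction). -/
def proj {n : ℕ} (e : EuclideanSpace ℝ (Fin n)) (p : Pt n) : Pt n :=
  (p.1 - ip p.1 e • e, p.2)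


/-!
Let `∂Ω` be `ε²`-flat at scale `ρ` around `p`, with approximating plane of spatial unit normal
`ν`. If `|⟪e, ν⟫| < ε`, then `proj e` maps `C_ρ(p) ∩ ∂Ω` into a slab of `e⊥ × ℝ` of width
`4ερ` in the direction of the component of `ν` orthogonal to `e` (and of size `ρ` in the other
spatial directions, `ρ²` in time), whose measure `≲ ε ρ^(n+1)` contradicts the lower bound on
the projection. Hence `|⟪e, ν⟫| ≥ ε` at every point of `F` and scale `≤ 2R`. For `p, q ∈ F`,
flatness around `p` at a scale comparable to `pdist p q` makes `p - q` almost orthogonal to `ν`,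
and since `ν` has a component at least `ε` along `e`, the component of `p - q` along `e` is at
most `1 / ε` times its component in `e⊥`, which is `|y - z|`, up to an error absorbed by
`ε ≤ 1 / 4`.
-/

open scoped RealInnerProductSpace

section InnerProductSpace

variable {E : Type*} [NormedAddCommGroup E] [InnerProductSpace ℝ E] {e : E}

theorem inner_sub_inner_smul_self (he : ‖e‖ = 1) (x : E) : ⟪x - ⟪x, e⟫ • e, e⟫ = 0 := by
  rw [inner_sub_left, real_inner_smul_left, real_inner_self_eq_norm_sq, he, one_pow, mul_one,
    sub_self]

theorem inner_sub_inner_smul_sub_inner_smul (he : ‖e‖ = 1) (x y : E) :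
    ⟪x - ⟪x, e⟫ • e, y - ⟪y, e⟫ • e⟫ = ⟪x, y⟫ - ⟪x, e⟫ * ⟪y, e⟫ := by
  rw [inner_sub_right, real_inner_smul_right, inner_sub_inner_smul_self he, mul_zero, sub_zero,
    inner_sub_left, real_inner_smul_left, real_inner_comm e y]

theorem norm_sub_inner_smul_le (he : ‖e‖ = 1) (x : E) : ‖x - ⟪x, e⟫ • e‖ ≤ ‖x‖ := by
  have h := inner_sub_inner_smul_sub_inner_smul he x x
  rw [real_inner_self_eq_norm_sq, real_inner_self_eq_norm_sq] at h
  exact (sq_le_sq₀ (norm_nonneg _) (norm_nonneg _)).1 (by nlinarith [sq_nonneg ⟪x, e⟫])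

theorem sub_inner_smul_sub_sub_inner_smul (x y : E) :
    (x - ⟪x, e⟫ • e) - (y - ⟪y, e⟫ • e) = (x - y) - ⟪x - y, e⟫ • e := by
  rw [inner_sub_left, sub_smul]
  abel

theorem exists_unit_orthogonal_abs_inner_le {ν : E} (he : ‖e‖ = 1) (hν : ‖ν‖ = 1)
    (hsmall : |⟪e, ν⟫| ≤ 1 / 2) :
    ∃ u : E, ‖u‖ = 1 ∧ ⟪e, u⟫ = 0 ∧
      ∀ v : E, |⟪v - ⟪v, e⟫ • e, u⟫| ≤ 2 * (|⟪v, ν⟫| + |⟪v, e⟫| * |⟪e, ν⟫|) := by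
  rw [← real_inner_comm e ν] at hsmall ⊢
  set ν' := ν - ⟪ν, e⟫ • e
  have hν' : 1 / 2 ≤ ‖ν'‖ := by
    have h := inner_sub_inner_smul_sub_inner_smul he ν ν
    rw [real_inner_self_eq_norm_sq, real_inner_self_eq_norm_sq, hν] at h
    nlinarith [norm_nonneg ν', abs_nonneg ⟪ν, e⟫, sq_abs ⟪ν, e⟫]
  have hν'_pos : 0 < ‖ν'‖ := by linarith
  refine ⟨‖ν'‖⁻¹ • ν', ?_, ?_, fun v => ?_⟩
  · rw [norm_smul, norm_inv, norm_norm, inv_mul_cancel₀ hν'_pos.ne']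
  · rw [real_inner_smul_right, real_inner_comm, inner_sub_inner_smul_self he, mul_zero]
  · rw [real_inner_smul_right, inner_sub_inner_smul_sub_inner_smul he, abs_mul, abs_inv,
      abs_norm, ← abs_mul]
    refine mul_le_mul ?_ (abs_sub _ _) (abs_nonneg _) zero_le_two
    rw [inv_le_comm₀ hν'_pos two_pos]
    linarith

theorem two_le_finrank_of_orthonormal_pair [FiniteDimensional ℝ E] {u : E} (he : ‖e‖ = 1)
    (hu : ‖u‖ = 1) (heu : ⟪e, u⟫ = 0) : 2 ≤ Module.finrank ℝ E := by
  have h : Orthonormal ℝ ![e, u] := by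
    rw [orthonormal_iff_ite]
    intro i j
    fin_cases i <;> fin_cases j <;> simp [he, hu, heu, real_inner_comm e u]
  simpa using h.linearIndependent.fintype_card_le_finrank

theorem exists_orthonormalBasis_zero_one [FiniteDimensional ℝ E] {m : ℕ}
    (hE : Module.finrank ℝ E = m + 2) {u : E} (he : ‖e‖ = 1) (hu : ‖u‖ = 1) (heu : ⟪e, u⟫ = 0) :
    ∃ b : OrthonormalBasis (Fin (m + 2)) ℝ E, b 0 = e ∧ b 1 = u := by
  have hv : Orthonormal ℝ (({0, 1} : Set (Fin (m + 2))).domRestrict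
      (Fin.cons e fun _ => u : Fin (m + 2) → E)) := by
    rw [orthonormal_iff_ite]
    rintro ⟨i, rfl | rfl⟩ ⟨j, rfl | rfl⟩ <;>
      simp [he, hu, heu, real_inner_comm e u, Subtype.ext_iff]
  obtain ⟨b, hb⟩ := hv.exists_orthonormalBasis_extension_of_card_eq (by simpa using hE)
  exact ⟨b, by simpa using hb 0 (by simp), by simpa using hb 1 (by simp)⟩

theorem mul_norm_le_of_abs_inner_le {ν v : E} {ε δ : ℝ} (he : ‖e‖ = 1) (hν : ‖ν‖ = 1)
    (hε : 0 ≤ ε) (htilt : ε ≤ |⟪e, ν⟫|) (hv : |⟪v, ν⟫| ≤ δ) :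
    ε * ‖v‖ ≤ δ + (1 + ε) * ‖v - ⟪v, e⟫ • e‖ := by
  set D := ‖v - ⟪v, e⟫ • e‖
  have hsplit : ‖v‖ ≤ D + |⟪v, e⟫| := by
    calc ‖v‖ = ‖(v - ⟪v, e⟫ • e) + ⟪v, e⟫ • e‖ := by rw [sub_add_cancel]
      _ ≤ D + |⟪v, e⟫| := by
        rw [← mul_one |⟪v, e⟫|, ← he, ← Real.norm_eq_abs, ← norm_smul]
        exact norm_add_le _ _
  have hnormal : |⟪v, e⟫| * |⟪e, ν⟫| ≤ δ + D := by
    have hD : |⟪v - ⟪v, e⟫ • e, ν⟫| ≤ D := by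
      simpa [hν] using abs_real_inner_le_norm (v - ⟪v, e⟫ • e) ν
    rw [inner_sub_left, real_inner_smul_left] at hD
    rw [← abs_mul]
    linarith [abs_sub_abs_le_abs_sub (⟪v, e⟫ * ⟪e, ν⟫) ⟪v, ν⟫,
      abs_sub_comm ⟪v, ν⟫ (⟪v, e⟫ * ⟪e, ν⟫)]
  nlinarith [mul_le_mul_of_nonneg_left htilt (abs_nonneg ⟪v, e⟫), norm_nonneg (v - ⟪v, e⟫ • e)]

end InnerProductSpace

theorem lipschitzWith_fin_cons_zero (k : ℕ) :
    LipschitzWith 1 fun x : Fin k → ℝ => (Fin.cons 0 x : Fin (k + 1) → ℝ) := by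
  refine LipschitzWith.of_dist_le_mul fun x y => ?_
  rw [NNReal.coe_one, one_mul, dist_pi_le_iff dist_nonneg]
  intro i
  induction i using Fin.cases with
  | zero => simp
  | succ i => simpa using dist_le_pi_dist x y i

theorem hausdorffMeasure_flat_box_le {E : Type*} [NormedAddCommGroup E] [InnerProductSpace ℝ E]
    [MeasurableSpace E] [BorelSpace E] {k : ℕ} (b : OrthonormalBasis (Fin (k + 1)) ℝ E) (Y : E)
    {r : Fin k → ℝ} (hr : ∀ i, 0 ≤ r i) :
    μH[k] {z | ⟪b 0, z - Y⟫ = 0 ∧ ∀ i, |⟪b i.succ, z - Y⟫| ≤ r i} ≤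
      ENNReal.ofReal ((k + 1) ^ k * ∏ i, 2 * r i) := by
  set f : (Fin k → ℝ) → E := fun x => Y + b.repr.symm (WithLp.toLp 2 (Fin.cons 0 x))
  have hf : LipschitzWith (k + 1) f := by
    have hY : LipschitzWith 1 fun z : EuclideanSpace ℝ (Fin (k + 1)) => Y + b.repr.symm z :=
      ((isometry_add_left Y).comp b.repr.symm.isometry).lipschitz
    have hK : ((k : ℝ≥0) + 1) ^ (2⁻¹ : ℝ) ≤ k + 1 := by
      simpa using NNReal.rpow_le_rpow_of_exponent_le (le_add_of_nonneg_left k.cast_nonneg)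
        (by norm_num : (2 : ℝ)⁻¹ ≤ 1)
    have hLp := (PiLp.lipschitzWith_toLp 2 fun _ : Fin (k + 1) => ℝ).weaken (K' := k + 1)
      (by simpa using hK)
    have := hY.comp (hLp.comp (lipschitzWith_fin_cons_zero k))
    rwa [one_mul, mul_one] at this
  have hsub : {z | ⟪b 0, z - Y⟫ = 0 ∧ ∀ i, |⟪b i.succ, z - Y⟫| ≤ r i} ⊆
      f '' univ.pi fun i => Icc (-r i) (r i) := by
    rintro z ⟨h0, hz⟩
    refine ⟨fun i => ⟪b i.succ, z - Y⟫, fun i _ => abs_le.1 (hz i), ?_⟩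
    rw [← eq_sub_iff_add_eq', b.repr.symm_apply_eq]
    ext i
    induction i using Fin.cases with
    | zero => simpa [b.repr_apply_apply, inner_sub_right] using h0.symm
    | succ i => simp [b.repr_apply_apply, inner_sub_right]
  have hvol : (μH[k] : Measure (Fin k → ℝ)) = volume := by
    simpa using hausdorffMeasure_pi_real (ι := Fin k)
  have h2r : ∀ i ∈ Finset.univ, 0 ≤ 2 * r i := fun i _ => by linarith [hr i]
  calc μH[k] {z | ⟪b 0, z - Y⟫ = 0 ∧ ∀ i, |⟪b i.succ, z - Y⟫| ≤ r i}
      ≤ μH[k] (f '' univ.pi fun i => Icc (-r i) (r i)) := measure_mono hsub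
    _ ≤ ((k + 1 : ℝ≥0) : ℝ≥0∞) ^ (k : ℝ) * μH[k] (univ.pi fun i => Icc (-r i) (r i)) :=
      hf.hausdorffMeasure_image_le (Nat.cast_nonneg k) _
    _ = ENNReal.ofReal ((k + 1) ^ k * ∏ i, 2 * r i) := by
      rw [hvol, volume_pi_pi, ENNReal.ofReal_mul (by positivity),
        ENNReal.ofReal_prod_of_nonneg h2r, ENNReal.ofReal_pow (by positivity),
        ← ENNReal.rpow_natCast]
      simp only [Real.volume_Icc, sub_neg_eq_add, two_mul]
      norm_cast

theorem sliceMeasure_le_of_subset_prod {n : ℕ} {S : Set (Pt n)}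
    {A : Set (EuclideanSpace ℝ (Fin n))} {a b : ℝ} (hS : S ⊆ A ×ˢ Ioo a b) :
    sliceMeasure n S ≤ μH[(n : ℝ) - 1] A * ENNReal.ofReal (b - a) := by
  calc sliceMeasure n S
      ≤ ∫⁻ t, (Ioo a b).indicator (fun _ => μH[(n : ℝ) - 1] A) t := by
        refine lintegral_mono fun t => ?_
        by_cases ht : t ∈ Ioo a b
        · rw [indicator_of_mem ht]
          exact measure_mono fun X hX => (hS hX).1
        · rw [indicator_of_notMem ht]
          exact (measure_mono fun X (hX : (X, t) ∈ S) => ht (hS hX).2).trans_eq measure_empty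
    _ = μH[(n : ℝ) - 1] A * ENNReal.ofReal (b - a) := by
      rw [lintegral_indicator_const measurableSet_Ioo, Real.volume_Ioo]

theorem mem_pcyl_iff {n : ℕ} {p q : Pt n} {ρ : ℝ} (hρ : 0 < ρ) :
    q ∈ pcyl p ρ ↔ dist q.1 p.1 < ρ ∧ √|q.2 - p.2| < ρ := by
  show dist q.1 p.1 < ρ ∧ |q.2 - p.2| < ρ ^ 2 ↔ _
  rw [Real.sqrt_lt' hρ]

theorem mem_pcyl_two_mul {n : ℕ} {c p q : Pt n} {R : ℝ} (hp : p ∈ pcyl c R)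
    (hq : q ∈ pcyl c R) : q ∈ pcyl p (2 * R) := by
  obtain ⟨hp1, hp2⟩ := hp
  obtain ⟨hq1, hq2⟩ := hq
  refine ⟨by linarith [dist_triangle_right q.1 p.1 c.1], ?_⟩
  have := abs_sub_le q.2 c.2 p.2
  rw [abs_sub_comm c.2] at this
  nlinarith

theorem exists_scale_mem_pcyl {n : ℕ} {c p q : Pt n} {R : ℝ} (hp : p ∈ pcyl c R)
    (hq : q ∈ pcyl c R) (hpq : 0 < pdist p q) :
    ∃ ρ, 0 < ρ ∧ ρ ≤ 2 * R ∧ ρ ≤ 2 * pdist p q ∧ q ∈ pcyl p ρ := by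
  have hR : 0 < R := dist_nonneg.trans_lt hp.1
  obtain ⟨hd, hs⟩ := (mem_pcyl_iff (by positivity)).1 (mem_pcyl_two_mul hp hq)
  have hρ : 0 < min (2 * R) (2 * pdist p q) := lt_min (by positivity) (by positivity)
  refine ⟨_, hρ, min_le_left _ _, min_le_right _ _,
    (mem_pcyl_iff hρ).2 ⟨lt_min hd ?_, lt_min hs ?_⟩⟩ <;>
    rw [pdist] at hpq ⊢
  · rw [dist_comm]
    linarith [Real.sqrt_nonneg |p.2 - q.2|]
  · rw [abs_sub_comm]
    linarith [dist_nonneg (x := p.1) (y := q.1)]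

theorem sliceMeasure_le_of_subset_slab {m : ℕ} {S : Set (Pt (m + 2))}
    (b : OrthonormalBasis (Fin (m + 2)) ℝ (EuclideanSpace ℝ (Fin (m + 2))))
    {Y : EuclideanSpace ℝ (Fin (m + 2))} {w ρ s : ℝ} (hw : 0 ≤ w) (hρ : 0 ≤ ρ)
    (hS : S ⊆ {z | ⟪b 0, z - Y⟫ = 0 ∧ |⟪b 1, z - Y⟫| ≤ w ∧ ‖z - Y‖ ≤ ρ} ×ˢ
      Ioo (s - ρ ^ 2) (s + ρ ^ 2)) :
    sliceMeasure (m + 2) S ≤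
      ENNReal.ofReal ((m + 2) ^ (m + 1) * (2 * w * (2 * ρ) ^ m) * (2 * ρ ^ 2)) := by
  set r : Fin (m + 1) → ℝ := Fin.cons w fun _ => ρ
  have hr : ∀ i, 0 ≤ r i := Fin.cases hw fun _ => hρ
  have hbox : {z | ⟪b 0, z - Y⟫ = 0 ∧ |⟪b 1, z - Y⟫| ≤ w ∧ ‖z - Y‖ ≤ ρ} ⊆
      {z | ⟪b 0, z - Y⟫ = 0 ∧ ∀ i, |⟪b i.succ, z - Y⟫| ≤ r i} := by
    rintro z ⟨h0, h1, hz⟩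
    refine ⟨h0, fun i => ?_⟩
    induction i using Fin.cases with
    | zero => simpa [r] using h1
    | succ i =>
      simpa [r] using (abs_real_inner_le_norm _ _).trans (by rw [b.norm_eq_one, one_mul]; exact hz)
  have hslice := sliceMeasure_le_of_subset_prod (hS.trans (prod_mono hbox subset_rfl))
  rw [show ((m + 2 : ℕ) : ℝ) - 1 = (m + 1 : ℕ) by push_cast; ring] at hslice
  refine hslice.trans ((mul_le_mul_left (hausdorffMeasure_flat_box_le b Y hr) _).trans_eq ?_)
  have hprod : ∏ i, 2 * r i = 2 * w * (2 * ρ) ^ m := by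
    simp [r, Fin.prod_univ_succ]
  rw [hprod, show s + ρ ^ 2 - (s - ρ ^ 2) = 2 * ρ ^ 2 by ring,
    ← ENNReal.ofReal_mul (by positivity)]
  congr 1
  push_cast
  ring

theorem proj_image_subset_slab {n : ℕ} {ε ρ : ℝ} (hε₀ : ε ≤ 1 / 4) (hρ : 0 < ρ)
    {Ω : Set (Pt n)} {p : Pt n} {e u ν : EuclideanSpace ℝ (Fin n)} (he : ‖e‖ = 1)
    (hflat : ∀ q ∈ frontier Ω ∩ pcyl p ρ, |ip (q.1 - p.1) ν| ≤ ε ^ 2 * ρ)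
    (htilt : |⟪e, ν⟫| < ε)
    (hu : ∀ v, |⟪v - ⟪v, e⟫ • e, u⟫| ≤ 2 * (|⟪v, ν⟫| + |⟪v, e⟫| * |⟪e, ν⟫|)) :
    proj e '' (pcyl p ρ ∩ frontier Ω) ⊆
      {z | ⟪e, z - (p.1 - ⟪p.1, e⟫ • e)⟫ = 0 ∧ |⟪u, z - (p.1 - ⟪p.1, e⟫ • e)⟫| ≤ 4 * ε * ρ ∧
        ‖z - (p.1 - ⟪p.1, e⟫ • e)‖ ≤ ρ} ×ˢ Ioo (p.2 - ρ ^ 2) (p.2 + ρ ^ 2) := by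
  rintro _ ⟨q, ⟨hq, hqΩ⟩, rfl⟩
  set v := q.1 - p.1
  have hz : (proj e q).1 - (p.1 - ⟪p.1, e⟫ • e) = v - ⟪v, e⟫ • e :=
    sub_inner_smul_sub_sub_inner_smul q.1 p.1
  have hv : ‖v‖ ≤ ρ := (dist_eq_norm q.1 p.1 ▸ hq.1).le
  have hvν : |⟪v, ν⟫| ≤ ε ^ 2 * ρ := hflat q ⟨hqΩ, hq⟩
  have hve : |⟪v, e⟫| ≤ ρ := by
    simpa [he] using (abs_real_inner_le_norm v e).trans
      (mul_le_mul_of_nonneg_right hv (norm_nonneg _))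
  obtain ⟨ht₁, ht₂⟩ := abs_lt.1 hq.2
  refine ⟨⟨?_, ?_, ?_⟩, ?_, ?_⟩
  · rw [hz, real_inner_comm, inner_sub_inner_smul_self he]
  · rw [hz, real_inner_comm]
    have hε2 : ε ^ 2 ≤ ε := by nlinarith [abs_nonneg ⟪e, ν⟫]
    nlinarith [hu v, mul_le_mul hve htilt.le (abs_nonneg _) hρ.le,
      mul_le_mul_of_nonneg_right hε2 hρ.le]
  · rw [hz]
    exact (norm_sub_inner_smul_le he v).trans hv
  · show p.2 - ρ ^ 2 < q.2
    linarith
  · show q.2 < p.2 + ρ ^ 2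
    linarith

theorem le_abs_ip_of_flat {n : ℕ} {ε ρ : ℝ} (hε : 0 < ε) (hε₀ : ε ≤ 1 / 4) (hρ : 0 < ρ)
    {Ω : Set (Pt n)} {p : Pt n} {e ν : EuclideanSpace ℝ (Fin n)} (he : ‖e‖ = 1)
    (hν : ‖ν‖ = 1) (hflat : ∀ q ∈ frontier Ω ∩ pcyl p ρ, |ip (q.1 - p.1) ν| ≤ ε ^ 2 * ρ)
    (hmeas : ENNReal.ofReal (2 ^ (n + 2) * (n + 1) ^ n * ε * ρ ^ (n + 1)) <
      sliceMeasure n (proj e '' (pcyl p ρ ∩ frontier Ω))) :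
    ε ≤ |ip e ν| := by
  by_contra! htilt
  rw [ip] at htilt
  obtain ⟨u, hu, heu, hu_le⟩ := exists_unit_orthogonal_abs_inner_le he hν (by linarith)
  have hsub := proj_image_subset_slab hε₀ hρ he hflat htilt hu_le
  obtain ⟨m, rfl⟩ := Nat.exists_eq_add_of_le' (by
    simpa using two_le_finrank_of_orthonormal_pair he hu heu : 2 ≤ n)
  obtain ⟨b, rfl, rfl⟩ := exists_orthonormalBasis_zero_one (m := m) (by simp) he hu heu
  have hlt := hmeas.trans_le (sliceMeasure_le_of_subset_slab b (by positivity) hρ.le hsub)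
  rw [ENNReal.ofReal_lt_ofReal_iff'] at hlt
  have hpow : ((m : ℝ) + 2) ^ (m + 1) ≤ ((m : ℝ) + 3) ^ (m + 2) :=
    (pow_le_pow_left₀ (by positivity) (by linarith) _).trans
      (pow_le_pow_right₀ (by linarith) (by omega))
  have hscale : 0 ≤ 2 ^ (m + 4) * ε * ρ ^ (m + 3) := by positivity
  have hlhs : 2 ^ (m + 2 + 2) * (((m + 2 : ℕ) : ℝ) + 1) ^ (m + 2) * ε * ρ ^ (m + 2 + 1) =
      ((m : ℝ) + 3) ^ (m + 2) * (2 ^ (m + 4) * ε * ρ ^ (m + 3)) := by push_cast; ring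
  have hrhs : ((m : ℝ) + 2) ^ (m + 1) * (2 * (4 * ε * ρ) * (2 * ρ) ^ m) * (2 * ρ ^ 2) =
      ((m : ℝ) + 2) ^ (m + 1) * (2 ^ (m + 4) * ε * ρ ^ (m + 3)) := by ring
  rw [hlhs, hrhs] at hlt
  linarith [hlt.1, mul_le_mul_of_nonneg_right hpow hscale]

theorem pdist_le_of_tilt {n : ℕ} {p q : Pt n} {e ν : EuclideanSpace ℝ (Fin n)} {ε ρ : ℝ}
    (he : ‖e‖ = 1) (hν : ‖ν‖ = 1) (hε : 0 < ε) (hε₀ : ε ≤ 1 / 4) (htilt : ε ≤ |ip e ν|)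
    (hρ : ρ ≤ 2 * pdist p q) (hq : |ip (q.1 - p.1) ν| ≤ ε ^ 2 * ρ) :
    pdist p q ≤
      (2 + 2 / ε) * (‖(p.1 - ip p.1 e • e) - (q.1 - ip q.1 e • e)‖ + √|p.2 - q.2|) := by
  have hcomp := mul_norm_le_of_abs_inner_le he hν hε.le htilt (v := p.1 - q.1)
    (δ := ε ^ 2 * ρ) (by rw [← neg_sub, inner_neg_left, abs_neg]; exact hq)
  rw [← sub_inner_smul_sub_sub_inner_smul, ← dist_eq_norm] at hcomp
  change ε * dist p.1 q.1 ≤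
    ε ^ 2 * ρ + (1 + ε) * ‖(p.1 - ip p.1 e • e) - (q.1 - ip q.1 e • e)‖ at hcomp
  rw [pdist] at hρ ⊢
  have hd := dist_nonneg (x := p.1) (y := q.1)
  have hs := Real.sqrt_nonneg |p.2 - q.2|
  have hε2 : ε ^ 2 * ρ ≤ ε / 2 * (dist p.1 q.1 + √|p.2 - q.2|) := by
    have hε4 : ε ^ 2 ≤ ε / 4 := by nlinarith
    nlinarith [mul_le_mul_of_nonneg_left hρ (sq_nonneg ε),
      mul_le_mul_of_nonneg_right hε4 (add_nonneg hd hs)]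
  rw [show 2 + 2 / ε = 2 * (1 + ε) / ε by field_simp; ring, div_mul_eq_mul_div, le_div_iff₀ hε]
  nlinarith [norm_nonneg ((p.1 - ip p.1 e • e) - (q.1 - ip q.1 e • e))]

/-- points of `∂Ω` where the boundary projects onto a large set form a
`Lip(1,1/2)` graph.  If `∂Ω` is `ε²`-flat at all scales `≤ 2R` around the points of
`F ⊆ ∂Ω ∩ C_R(0,0)`, and around each point of `F` and at each scale `ρ ≤ 2R` the
projection of `C_ρ ∩ ∂Ω` onto `{x_n = 0}` has measure `> θ ρ^{n+1}` with `θ = c(n) ε`,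
then `‖(Y,s) - (Z,t)‖ ≤ C(n,ε)(|y - z| + |s - t|^{1/2})` for all `(Y,s), (Z,t) ∈ F`. -/
theorem statement9 (n : ℕ) :
    ∃ c : ℝ, 0 < c ∧ ∃ ε₀ : ℝ, 0 < ε₀ ∧
      ∀ ε : ℝ, 0 < ε → ε ≤ ε₀ →
        ∃ C : ℝ, 0 < C ∧
          ∀ (Ω F : Set (Pt n)) (R : ℝ) (e : EuclideanSpace ℝ (Fin n)),
            0 < R → ‖e‖ = 1 → F ⊆ frontier Ω ∩ pcyl (0 : Pt n) R →
            (∀ p ∈ F, ∀ ρ : ℝ, 0 < ρ → ρ ≤ 2 * R →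
              ∃ ν : EuclideanSpace ℝ (Fin n), ‖ν‖ = 1 ∧
                ∀ q ∈ frontier Ω ∩ pcyl p ρ, |ip (q.1 - p.1) ν| ≤ ε ^ 2 * ρ) →
            (∀ p ∈ F, ∀ ρ : ℝ, 0 < ρ → ρ ≤ 2 * R →
              ENNReal.ofReal (c * ε * ρ ^ (n + 1)) <
                sliceMeasure n (proj e '' (pcyl p ρ ∩ frontier Ω))) →
            ∀ p ∈ F, ∀ q ∈ F,
              pdist p q ≤
                C * (‖(p.1 - ip p.1 e • e) - (q.1 - ip q.1 e • e)‖ +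
                  Real.sqrt |p.2 - q.2|) := by
  -- `c` dominates the constant `2 ^ (n + 2) * n ^ (n - 1)` of the slab of width `4ερ`.
  refine ⟨2 ^ (n + 2) * (n + 1) ^ n, by positivity, 1 / 4, by norm_num,
    fun ε hε hε₀ => ⟨2 + 2 / ε, by positivity, ?_⟩⟩
  intro Ω F R e _ he hF hflat hmeas p hp q hq
  have hpq : 0 ≤ pdist p q := add_nonneg dist_nonneg (Real.sqrt_nonneg _)
  rcases hpq.eq_or_lt with h0 | hpos
  · rw [← h0]
    positivity
  obtain ⟨ρ, hρ, hρR, hρpq, hqρ⟩ := exists_scale_mem_pcyl (hF hp).2 (hF hq).2 hpos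
  obtain ⟨ν, hν, hflatν⟩ := hflat p hp ρ hρ hρR
  have htilt := le_abs_ip_of_flat hε hε₀ hρ he hν hflatν (hmeas p hp ρ hρ hρR)
  exact pdist_le_of_tilt he hν hε hε₀ htilt hρpq (hflatν q ⟨(hF hq).1, hqρ⟩)
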